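/- The function f_∞ : (A ∪ {◁_n : 0 < n < ω})^ω → A^ω, defined by f_∞(x) = lim_{n<ω} (f_n ∘ … ∘ f_1)(x) when this limit is defined and infinite, and f_∞(x) = 0^ω otherwise, is Borel measurable. -/

import Mathlib

open Set MeasureTheory

/-! ### Discrete topology on `Option` (the alphabet `A ∪ {◁}`) -/

instance optionTopology (A : Type*) : TopologicalSpace (Option A) := ⊥
instance optionDiscrete (A : Type*) : DiscreteTopology (Option A) := ⟨rfl⟩

/-! ### Finite-word eraser evaluation -/

/-- One step of the left-to-right backspace evaluation; the accumulator holds the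
(reversed) surviving word, `none` meaning the evaluation is undefined. -/
def eraseStep {B : Type*} [DecidableEq B] (e : B) (acc : Option (List B)) (a : B) :
    Option (List B) :=
  acc.bind fun l =>
    if a = e then (match l with | [] => none | _ :: t => some t) else some (a :: l)

/-- `finErase e u` is `some (u^e)` if the evaluation of the eraser `e` in `u` is
defined, and `none` otherwise. -/
def finErase {B : Type*} [DecidableEq B] (e : B) (u : List B) : Option (List B) :=
  (u.foldl (eraseStep e) (some [])).map List.reverse

/-- The length-`n` prefix `x[n]` of an infinite word. -/
def pre {B : Type*} (x : ℕ → B) (n : ℕ) : List B := (List.range n).map x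

/-- The infinite word `y` is the limit of the sequence of words `s n`
(every finite prefix of `y` eventually stabilizes). -/
def LimitsTo {B : Type*} (s : ℕ → ℕ → B) (y : ℕ → B) : Prop :=
  ∀ k : ℕ, ∃ N : ℕ, ∀ p ≥ N, ∀ i < k, s p i = y i

/-- `ErasesTo e x y` expresses that `x^e` is defined, infinite and equal to `y`:
all prefix evaluations `(x[p])^e` are defined, and for every `k` the length-`k`
prefix of `(x[p])^e` is eventually the length-`k` prefix of `y`. -/
def ErasesTo {B : Type*} [DecidableEq B] (e : B) (x y : ℕ → B) : Prop :=
  (∀ n, (finErase e (pre x n)).isSome) ∧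
  ∀ k : ℕ, ∃ N : ℕ, ∀ p ≥ N, ∀ l, finErase e (pre x p) = some l → l.take k = pre y k

/-- `X^≈ ⊆ (A ∪ {◁})^ω`, the eraser symbol `◁` being coded by `none`. -/
def ApproxSet {A : Type*} [DecidableEq A] (X : Set (ℕ → A)) : Set (ℕ → Option A) :=
  {x | ∃ y : ℕ → A, ErasesTo (none : Option A) x (fun i => some (y i)) ∧ y ∈ X}

/-! ### Wadge reducibility -/

/-- `S ≤_W T` : `S` is the preimage of `T` under some continuous map. -/
def WadgeLE {X Y : Type*} [TopologicalSpace X] [TopologicalSpace Y]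
    (S : Set X) (T : Set Y) : Prop :=
  ∃ f : X → Y, Continuous f ∧ S = f ⁻¹' T

/-! ### The Borel hierarchy (finite levels and level `ω`) -/

/-- The class `Σ^0_n` for finite `n ≥ 1`: `Σ^0_1` is the class of open sets and,
for `ξ > 1`, `Σ^0_ξ` is the class of countable unions of sets each of which is the
complement of a `Σ^0_{ξ'}` set for some `1 ≤ ξ' < ξ`. -/
def SigmaFin (X : Type*) [TopologicalSpace X] : ℕ → Set (Set X)
  | 0 => ∅
  | 1 => {s | IsOpen s}
  | (n+2) => {s | ∃ (f : ℕ → Set X) (m : ℕ → Fin (n+2)),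
      (∀ k, 1 ≤ (m k : ℕ) ∧ (f k)ᶜ ∈ SigmaFin X (m k)) ∧ s = ⋃ k, f k}
  termination_by n => n
  decreasing_by exact (m k).isLt

/-- `Π^0_n` : complements of `Σ^0_n` sets. -/
def PiFin (X : Type*) [TopologicalSpace X] (n : ℕ) : Set (Set X) :=
  {s | sᶜ ∈ SigmaFin X n}

/-- `Δ^0_n`. -/
def DeltaFin (X : Type*) [TopologicalSpace X] (n : ℕ) : Set (Set X) :=
  SigmaFin X n ∩ PiFin X n

/-- `Σ^0_ω` : countable unions of sets each in some `Π^0_{ξ'}` with `1 ≤ ξ' < ω`. -/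
def SigmaOmega (X : Type*) [TopologicalSpace X] : Set (Set X) :=
  {s | ∃ (f : ℕ → Set X) (m : ℕ → ℕ),
      (∀ k, 1 ≤ m k ∧ f k ∈ PiFin X (m k)) ∧ s = ⋃ k, f k}

/-- `Π^0_ω` : complements of `Σ^0_ω` sets. -/
def PiOmega (X : Type*) [TopologicalSpace X] : Set (Set X) :=
  {s | sᶜ ∈ SigmaOmega X}

/-- `Δ^0_ω = Σ^0_ω ∩ Π^0_ω`. -/
def DeltaOmega (X : Type*) [TopologicalSpace X] : Set (Set X) :=
  SigmaOmega X ∩ PiOmega X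

/-- `S ⊆ A^ω` is `Π^0_n`-complete: it is `Π^0_n` and every `Π^0_n` subset of a space
of infinite words over a finite alphabet (with the discrete topology) Wadge-reduces
to it. -/
def PiFinComplete {A : Type*} [TopologicalSpace A] (n : ℕ) (S : Set (ℕ → A)) : Prop :=
  S ∈ PiFin (ℕ → A) n ∧
    ∀ (B : Type) [Fintype B] [TopologicalSpace B] [DiscreteTopology B],
      ∀ T : Set (ℕ → B), T ∈ PiFin (ℕ → B) n → WadgeLE T S
/-! ### The alphabet `{0,1} ∪ {◁_n : 0 < n < ω}` and iterated erasing -/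

/-- The alphabet `{0,1} ∪ {◁_n : 0 < n < ω}` : `Sum.inl b` is the binary letter `b`
(`false` for `0`, `true` for `1`) and `Sum.inr k` is the eraser `◁_{k+1}`. -/
abbrev Letter : Type := Bool ⊕ ℕ

/-- The binary letter `0` or `1` viewed in the extended alphabet. -/
def ltr (b : Bool) : Letter := Sum.inl b

/-- The eraser `◁_{k+1}`. -/
def er (k : ℕ) : Letter := Sum.inr k

/-- `X^{≈∞}` for `X ⊆ {0,1}^ω` : those `x` such that each successive eraser
evaluation `x_n = (((x^{◁_1})^{◁_2})^…)^{◁_n}` is defined and infinite, and the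
limit of the `x_n` is defined, infinite, and belongs to `X`. -/
def InfEraseSet (X : Set (ℕ → Bool)) : Set (ℕ → Letter) :=
  {x | ∃ s : ℕ → (ℕ → Letter),
        s 0 = x ∧ (∀ n : ℕ, ErasesTo (er n) (s n) (s (n + 1))) ∧
        ∃ y : ℕ → Bool, y ∈ X ∧ LimitsTo s (fun i => ltr (y i))}

open Classical in
/-- `f(x) = x^◁` if `x^◁` is defined and infinite, and `f(x) = 0^ω` otherwise
(the eraser `◁` is coded by `none`, and `z` plays the role of the letter `0`). -/
noncomputable def eraseFun {A : Type*} [DecidableEq A] (z : A) (x : ℕ → Option A) :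
    ℕ → A :=
  if h : ∃ y : ℕ → A, ErasesTo (none : Option A) x (fun i => some (y i)) then h.choose
  else fun _ => z

open Classical in
/-- `f_{k+1}(x) = x^{◁_{k+1}}` if this is defined and infinite, `0^ω` otherwise. -/
noncomputable def fStep (k : ℕ) (x : ℕ → Letter) : ℕ → Letter :=
  if h : ∃ y : ℕ → Letter, ErasesTo (er k) x y then h.choose else fun _ => ltr false

/-- `fFun 0 = id` and `fFun (k+1) = f_{k+1}`. -/
noncomputable def fFun : ℕ → (ℕ → Letter) → (ℕ → Letter)
  | 0 => id
  | (k+1) => fStep k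

/-- `fIter n = f_n ∘ … ∘ f_1` (with `fIter 0 = id`). -/
noncomputable def fIter : ℕ → (ℕ → Letter) → (ℕ → Letter)
  | 0 => id
  | (n+1) => fun x => fStep n (fIter n x)

open Classical in
/-- `f_∞(x) = lim_{n<ω} (f_n ∘ … ∘ f_1)(x)` if this limit is defined and infinite
(and over `{0,1}`), and `f_∞(x) = 0^ω` otherwise. -/
noncomputable def fInf (x : ℕ → Letter) : ℕ → Bool :=
  if h : ∃ y : ℕ → Bool, LimitsTo (fun n => fIter n x) (fun i => ltr (y i)) then h.choose
  else fun _ => false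

/-- The set of infinite binary words containing infinitely many `1`s. -/
def InfManyOnes : Set (ℕ → Bool) := {y | {i | y i = true}.Infinite}
/-! ### The languages `L_n`, `L_∞`, `W`, and `ω`-powers -/

/-- Successive evaluation of the erasers `◁_1, …, ◁_n` (coded by
`Sum.inr 0, …, Sum.inr (n-1)`) on a finite word over `{0,1,◁_1,…,◁_n}`;
`none` if some evaluation is undefined. -/
def eraseChain (n : ℕ) (u : List (Bool ⊕ Fin n)) : Option (List (Bool ⊕ Fin n)) :=
  (List.finRange n).foldl (fun acc i => acc.bind (finErase (Sum.inr i))) (some u)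

/-- The language `L_n ⊆ {0,1,◁_1,…,◁_n}^*`: the words whose successive eraser
evaluations (first `◁_1`, then `◁_2`, …, then `◁_n`, each being defined) yield a
word in `0^*1`. -/
def Lword (n : ℕ) : Language (Bool ⊕ Fin n) :=
  {u | ∃ v, eraseChain n u = some v ∧
        ∃ k : ℕ, v = List.replicate k (Sum.inl false) ++ [Sum.inl true]}

/-- The eight-letter alphabet `{0, 1, α, B, C, D, E, β}`, coded as
`0, 1, 2, 3, 4, 5, 6, 7` respectively. -/
abbrev Gam : Type := Fin 8

/-- The code `α B^j C^j D^j E^j β` of the eraser `◁_j`. -/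
def eraserCode (j : ℕ) : List Gam :=
  (2 : Gam) :: (List.replicate j (3 : Gam) ++ List.replicate j (4 : Gam) ++
    List.replicate j (5 : Gam) ++ List.replicate j (6 : Gam) ++ [(7 : Gam)])

/-- Encoding of a letter of `{0,1,◁_1,…,◁_n}` over `{0, 1, α, B, C, D, E, β}` :
binary letters are kept, and `◁_j` is replaced by its code. -/
def encLetter {n : ℕ} : Bool ⊕ Fin n → List Gam
  | Sum.inl false => [(0 : Gam)]
  | Sum.inl true => [(1 : Gam)]
  | Sum.inr i => eraserCode ((i : ℕ) + 1)

/-- `L_∞ = ⋃_{n<ω} L_n`, with each eraser replaced by its code. -/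
def Linf : Language Gam :=
  {w | ∃ n : ℕ, ∃ u ∈ Lword n, w = (u.map encLetter).flatten}

/-- A wrong code: a word beginning with `α` and ending with `β` which is not of
the form `α B^j C^j D^j E^j β` for any `j ≥ 1`. -/
def IsWrongCode (v : List Gam) : Prop :=
  v.head? = some (2 : Gam) ∧ v.getLast? = some (7 : Gam) ∧ ¬ ∃ j ≥ 1, v = eraserCode j

/-- `W` : the finite words over `{0, 1, α, B, C, D, E, β}` containing (as a
subword, i.e. an infix) an occurrence of a wrong code. -/
def Wlang : Language Gam := {w | ∃ v, IsWrongCode v ∧ v <:+: w}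

/-- `l` is a prefix of the infinite word `x`. -/
def IsPrefixOfWord {A : Type*} (l : List A) (x : ℕ → A) : Prop :=
  l = (List.range l.length).map x

/-- The `ω`-power `V^ω = {u_1 u_2 … : ∀ n, u_n ∈ V \ {ε}}` of a language of
finite words. -/
def omegaPower {A : Type*} (V : Language A) : Set (ℕ → A) :=
  {x | ∃ u : ℕ → List A, (∀ n, u n ∈ V ∧ u n ≠ []) ∧
        ∀ n, IsPrefixOfWord (((List.range n).map u).flatten) x}

/-- The finite word `v` occurs in the infinite word `x` at position `i`. -/
def OccursAt {A : Type*} [Inhabited A] (v : List A) (x : ℕ → A) (i : ℕ) : Prop :=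
  ∀ j < v.length, x (i + j) = v.getD j default

/-- A wrong code occurs in `x` at position `i`. -/
def WrongAt (x : ℕ → Gam) (i : ℕ) : Prop := ∃ v, IsWrongCode v ∧ OccursAt v x i

/-- The concatenation `w · y` of a finite word and an infinite word. -/
def wordAppend {A : Type*} (w : List A) (y : ℕ → A) : ℕ → A :=
  fun i => if h : i < w.length then w.get ⟨i, h⟩ else y (i - w.length)

/-- `U · Z = {u y : u ∈ U, y ∈ Z}` for `U` a set of finite words and `Z` a set of
infinite words. -/
def concatSet {A : Type*} (U : Language A) (Z : Set (ℕ → A)) : Set (ℕ → A) :=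
  {x | ∃ u ∈ U, ∃ y ∈ Z, x = wordAppend u y}

/-- The language `V = L_∞ ∪ W`. -/
def Vlang : Language Gam := {w | w ∈ Linf ∨ w ∈ Wlang}

/-! Each `f_k` and `f_∞` has the same shape: the limit of a sequence of Borel maps where that
limit exists (and lands in the right alphabet), and a constant elsewhere. For `f_k` the maps are
`x ↦ (x[p])^{◁_k}`, which are continuous because they depend on finitely many letters only; for
`f_∞` they are the `f_n ∘ … ∘ f_1`, Borel by induction. Into a Polish space, the set where such a
limit exists is Borel and so is the limit, which makes every map of this shape Borel. -/

open Filter Topology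

instance Sum.instDiscreteMeasurableSpace {α β : Type*} [MeasurableSpace α] [MeasurableSpace β]
    [DiscreteMeasurableSpace α] [DiscreteMeasurableSpace β] : DiscreteMeasurableSpace (α ⊕ β) :=
  ⟨fun _ => measurableSet_sum_iff.2 ⟨.of_discrete, .of_discrete⟩⟩

open Classical in
theorem measurable_dite_exists_tendsto {α β γ : Type*} [MeasurableSpace α] [MeasurableSpace β]
    [TopologicalSpace γ] [PolishSpace γ] [MeasurableSpace γ] [BorelSpace γ]
    {e : β → γ} {r : γ → β} (he : Measurable e) (hr : Measurable r) (hre : Function.LeftInverse r e)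
    {f : ℕ → α → γ} (hf : ∀ n, Measurable (f n)) (d : β) :
    Measurable fun x => if h : ∃ y, Tendsto (f · x) atTop (𝓝 (e y)) then h.choose else d := by
  classical
  have : Nonempty γ := ⟨e d⟩
  set L : α → γ := fun x => limUnder atTop (f · x)
  have hL : Measurable L :=
    (StronglyMeasurable.limUnder fun n => (hf n).stronglyMeasurable).measurable
  set S : Set α := {x | ∃ y, Tendsto (f · x) atTop (𝓝 (e y))}
  -- `range e = {c | e (r c) = c}` is measurable
  have hS : S =
      {x | ∃ c, Tendsto (f · x) atTop (𝓝 c)} ∩ {x | e (r (L x)) = L x} := by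
    ext x
    constructor
    · rintro ⟨y, hy⟩
      exact ⟨⟨e y, hy⟩, show e (r (L x)) = L x by rw [show L x = e y from hy.limUnder_eq, hre y]⟩
    · rintro ⟨⟨c, hc⟩, hx⟩
      refine ⟨r (L x), ?_⟩
      rwa [hx, show L x = c from hc.limUnder_eq]
  have hmeas : MeasurableSet S := by
    rw [hS]
    exact (measurableSet_exists_tendsto hf).inter (measurableSet_eq_fun (he.comp (hr.comp hL)) hL)
  have hF : (fun x => if h : ∃ y, Tendsto (f · x) atTop (𝓝 (e y)) then h.choose else d) =
      S.piecewise (r ∘ L) fun _ => d := by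
    funext x
    by_cases h : ∃ y, Tendsto (f · x) atTop (𝓝 (e y))
    · rw [dif_pos h, Set.piecewise_eq_of_mem _ _ _ (show x ∈ S from h), Function.comp_apply,
        show L x = e h.choose from h.choose_spec.limUnder_eq, hre]
    · rw [dif_neg h, Set.piecewise_eq_of_notMem _ _ _ (show x ∉ S from h)]
  rw [hF]
  exact Measurable.piecewise hmeas (hr.comp hL) measurable_const

theorem measurable_pi_map_of_discrete {ι α β : Type*} [MeasurableSpace α]
    [DiscreteMeasurableSpace α] [MeasurableSpace β] (g : ι → α → β) :
    Measurable fun (c : ι → α) i => g i (c i) :=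
  measurable_pi_lambda _ fun i => Measurable.of_discrete.comp (measurable_pi_apply i)

theorem limitsTo_iff_tendsto {B : Type*} [TopologicalSpace B] [DiscreteTopology B]
    {s : ℕ → ℕ → B} {y : ℕ → B} : LimitsTo s y ↔ Tendsto s atTop (𝓝 y) := by
  simp only [tendsto_pi_nhds, nhds_discrete, tendsto_pure]
  constructor
  · intro h i
    obtain ⟨N, hN⟩ := h (i + 1)
    exact eventually_atTop.2 ⟨N, fun p hp => hN p hp i i.lt_succ_self⟩
  · intro h k
    exact eventually_atTop.1 ((eventually_all_finite (Set.finite_lt_nat k)).2 fun i _ => h i)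

section Prefix

variable {B : Type*}

theorem pre_add (x : ℕ → B) (p q : ℕ) : pre x (p + q) = pre x p ++ pre (fun i => x (p + i)) q := by
  simp [pre, List.range_add]

theorem getElem?_pre {x : ℕ → B} {p i : ℕ} (h : i < p) : (pre x p)[i]? = some (x i) := by
  simp [pre, h]

theorem getElem?_pre_of_le {x : ℕ → B} {p i : ℕ} (h : p ≤ i) : (pre x p)[i]? = none := by
  simp [pre, h]

theorem pre_eq_ofFn (x : ℕ → B) (p : ℕ) : pre x p = List.ofFn fun j : Fin p => x j := by
  rw [List.ofFn_eq_map, pre, ← List.map_coe_finRange_eq_range, List.map_map]; rfl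

theorem continuous_comp_pre {Z : Type*} [TopologicalSpace B] [DiscreteTopology B]
    [TopologicalSpace Z] (Φ : List B → Z) (p : ℕ) : Continuous fun x : ℕ → B => Φ (pre x p) := by
  simp only [pre_eq_ofFn]
  exact (continuous_of_discreteTopology (f := fun w : Fin p → B => Φ (List.ofFn w))).comp
    (continuous_pi fun j => continuous_apply (j : ℕ))

end Prefix

section Erasure

variable {B : Type*} [DecidableEq B]

theorem foldl_eraseStep_none (e : B) (u : List B) : u.foldl (eraseStep e) none = none := by
  induction u with
  | nil => rfl
  | cons a u ih => exact ih

theorem finErase_append_eq_none {e : B} {u : List B} (h : finErase e u = none) (v : List B) :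
    finErase e (u ++ v) = none := by
  rw [finErase, Option.map_eq_none_iff] at h ⊢
  rw [List.foldl_append, h, foldl_eraseStep_none]

theorem finErase_pre_eq_none_of_le {e : B} {x : ℕ → B} {p q : ℕ} (hpq : p ≤ q)
    (h : finErase e (pre x p) = none) : finErase e (pre x q) = none := by
  obtain ⟨r, rfl⟩ := Nat.exists_eq_add_of_le hpq
  rw [pre_add]
  exact finErase_append_eq_none h _

/-- `x[p]^e` as a partial infinite word: `none` beyond its length, and everywhere if the evaluation
is undefined. -/
def erasePrefix (e : B) (x : ℕ → B) (p : ℕ) : ℕ → Option B :=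
  fun i => (finErase e (pre x p)).bind (·[i]?)

theorem continuous_erasePrefix [TopologicalSpace B] [DiscreteTopology B] (e : B) (p : ℕ) :
    Continuous fun x => erasePrefix e x p :=
  continuous_comp_pre (Z := ℕ → Option B) (fun w i => (finErase e w).bind (·[i]?)) p

theorem erasesTo_iff_tendsto [TopologicalSpace B] [DiscreteTopology B] {e : B} {x y : ℕ → B} :
    ErasesTo e x y ↔ Tendsto (erasePrefix e x) atTop (𝓝 fun i => some (y i)) := by
  simp only [tendsto_pi_nhds, nhds_discrete, tendsto_pure, erasePrefix]
  constructor
  · rintro ⟨hdef, hlim⟩ i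
    obtain ⟨N, hN⟩ := hlim (i + 1)
    refine eventually_atTop.2 ⟨N, fun p hp => ?_⟩
    obtain ⟨l, hl⟩ := Option.isSome_iff_exists.1 (hdef p)
    rw [hl, Option.bind_some, ← List.getElem?_take_of_lt i.lt_succ_self, hN p hp l hl,
      getElem?_pre i.lt_succ_self]
  · intro h
    refine ⟨fun n => ?_, fun k => ?_⟩
    -- an undefined evaluation stays undefined, so it cannot converge at coordinate `0`
    · obtain ⟨p, hp, hpn⟩ := ((h 0).and (eventually_ge_atTop n)).exists
      rw [Option.isSome_iff_ne_none]
      intro hn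
      rw [finErase_pre_eq_none_of_le hpn hn] at hp
      simp at hp
    · obtain ⟨N, hN⟩ := eventually_atTop.1
        ((eventually_all_finite (Set.finite_lt_nat k)).2 fun i _ => h i)
      refine ⟨N, fun p hp l hl => List.ext_getElem? fun i => ?_⟩
      rcases lt_or_ge i k with hik | hki
      · have := hN p hp i hik
        rw [hl, Option.bind_some] at this
        rw [List.getElem?_take_of_lt hik, this, getElem?_pre hik]
      · rw [getElem?_pre_of_le hki, List.getElem?_eq_none (by simpa using Or.inl hki)]

end Erasure

open Classical in
theorem measurable_dite_exists_erasesTo {B : Type*} [DecidableEq B] [TopologicalSpace B]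
    [DiscreteTopology B] [Countable B] [MeasurableSpace B] [DiscreteMeasurableSpace B]
    (e : B) (d : ℕ → B) :
    Measurable fun x : ℕ → B => if h : ∃ y, ErasesTo e x y then h.choose else d := by
  classical
  let : MeasurableSpace (Option B) := ⊤
  -- instance search does not find `PolishSpace (ℕ → Option B)` without this step
  have : PolishSpace (Option B) := inferInstance
  have h := measurable_dite_exists_tendsto (measurable_pi_map_of_discrete fun _ => some)
    (measurable_pi_map_of_discrete fun i o => o.getD (d i)) (fun _ => rfl)
    (fun p => (continuous_erasePrefix e p).measurable) d
  simp only [← erasesTo_iff_tendsto] at h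
  exact h

theorem measurable_fStep (k : ℕ) : Measurable (fStep k) :=
  measurable_dite_exists_erasesTo (er k) _

theorem measurable_fIter (n : ℕ) : Measurable (fIter n) := by
  induction n with
  | zero => exact measurable_id
  | succ n ih => exact (measurable_fStep n).comp ih

theorem measurable_fInf : Measurable fInf := by
  classical
  have h := measurable_dite_exists_tendsto (measurable_pi_map_of_discrete fun _ => ltr)
    (measurable_pi_map_of_discrete fun _ => Sum.elim id fun _ => false) (fun _ => rfl)
    measurable_fIter fun _ => false
  simp only [← limitsTo_iff_tendsto] at h
  exact h

/-- The function `f_∞(x) = lim_{n<ω} (f_n ∘ … ∘ f_1)(x)` (and `0^ω`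
when this limit is not defined and infinite) is Borel measurable. -/
theorem fInf_borel :
    ∀ U : Set (ℕ → Bool), IsOpen U →
      MeasurableSet[borel (ℕ → Letter)] (fInf ⁻¹' U) := by
  intro U hU
  rw [← BorelSpace.measurable_eq]
  exact measurable_fInf hU.measurableSet
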